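/- Let V be a finite type with exactly 6 elements and Γ a connected simple graph on V. Suppose the group Perm(Fin 3) acts on V so that the action preserves adjacency (for all g and all u, v: Γ.Adj u v ↔ Γ.Adj (g • u) (g • v)) and is transitive on V. Then Γ has at least 6 edges. -/

import Mathlib

/-!
The symmetries act on `Γ` by graph automorphisms, so transitivity makes `Γ` `d`-regular, and the
handshake lemma gives `2 |E| = 6 d`, i.e. `|E| = 3 d`. A connected graph on 6 vertices has at
least 5 edges, so `d ≥ 2` and `|E| ≥ 6`.
-/

namespace SimpleGraph

variable {G V : Type*} [Group G] [MulAction G V] {Γ : SimpleGraph V}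

def isoOfSMul (hadj : ∀ (g : G) (u v : V), Γ.Adj u v ↔ Γ.Adj (g • u) (g • v)) (g : G) :
    Γ ≃g Γ :=
  ⟨MulAction.toPerm g, (hadj g _ _).symm⟩

theorem isRegularOfDegree_of_isPretransitive [Fintype V] [DecidableRel Γ.Adj]
    (hadj : ∀ (g : G) (u v : V), Γ.Adj u v ↔ Γ.Adj (g • u) (g • v))
    [MulAction.IsPretransitive G V] (v : V) : Γ.IsRegularOfDegree (Γ.degree v) := fun w => by
  obtain ⟨g, rfl⟩ := MulAction.exists_smul_eq G v w
  exact (isoOfSMul hadj g).degree_eq v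

theorem IsRegularOfDegree.card_mul_eq_two_mul_card_edgeFinset [Fintype V] [DecidableRel Γ.Adj]
    {d : ℕ} (h : Γ.IsRegularOfDegree d) : Fintype.card V * d = 2 * Γ.edgeFinset.card := by
  rw [← sum_degrees_eq_twice_card_edges, Finset.sum_congr rfl fun v _ => h.degree_eq v]
  simp

end SimpleGraph

/-- A connected graph on 6 vertices carrying a transitive `S₃`-action by graph
automorphisms has at least 6 edges. -/
theorem stmt_2 (V : Type*) [Fintype V] (hV : Fintype.card V = 6)
    (Γ : SimpleGraph V) (hconn : Γ.Connected)
    [MulAction (Equiv.Perm (Fin 3)) V]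
    (hadj : ∀ (g : Equiv.Perm (Fin 3)) (u v : V), Γ.Adj u v ↔ Γ.Adj (g • u) (g • v))
    (htrans : MulAction.IsPretransitive (Equiv.Perm (Fin 3)) V) :
    6 ≤ Γ.edgeSet.ncard := by
  classical
  obtain ⟨v⟩ := hconn.nonempty
  have hregular := SimpleGraph.isRegularOfDegree_of_isPretransitive hadj v
  have handshake := hregular.card_mul_eq_two_mul_card_edgeFinset
  rw [hV] at handshake
  have htree := hconn.card_vert_le_card_edgeSet_add_one
  simp only [Nat.card_eq_fintype_card, SimpleGraph.card_edgeSet, hV] at htree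
  rw [← Nat.card_coe_set_eq, Nat.card_eq_fintype_card, SimpleGraph.card_edgeSet]
  omega
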